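/- arXiv:0908.3466 — 4 statements merged into one kernel-verified Lean document; each statement's English description precedes it below -/
import Mathlib

section
/- Let $(a_j)_{j\ge 1}$ be a sequence of positive real numbers with $\sum_{j=1}^{\infty} a_j < \infty$. Then $\frac{1}{N^2}\sum_{j=1}^{N} a_j^{-1} \to +\infty$ as $N \to \infty$. -/
open Filter Finset

/-!
On a block `(M, N]` of indices Cauchy–Schwarz gives
`(N - M)² ≤ (∑_{(M,N]} aⱼ) · ∑_{(M,N]} aⱼ⁻¹`. Summability makes the first factor smaller
than any `ε > 0` once `M` is large, so `∑_{j ≤ N} aⱼ⁻¹ ≥ (N - M)² / ε ≥ N² / (4ε)` for `N > 2M`.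
-/

theorem Finset.sq_card_div_sum_le_sum_inv {ι R : Type*} [Semifield R] [LinearOrder R]
    [IsStrictOrderedRing R] [ExistsAddOfLE R] (s : Finset ι) {g : ι → R}
    (hg : ∀ i ∈ s, 0 < g i) : (#s : R) ^ 2 / ∑ i ∈ s, g i ≤ ∑ i ∈ s, (g i)⁻¹ := by
  simpa using sq_sum_div_le_sum_sq_div s (fun _ ↦ (1 : R)) hg

theorem Summable.exists_sum_Ioc_lt {a : ℕ → ℝ} (hsum : Summable a) {ε : ℝ} (hε : 0 < ε) :
    ∃ M, ∀ N, ∑ j ∈ Ioc M N, a j < ε := by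
  obtain ⟨s, hs⟩ := summable_iff_vanishing.mp hsum (Set.Iio ε) (Iio_mem_nhds hε)
  refine ⟨s.sup id, fun N ↦ hs _ (disjoint_left.mpr fun j hj hjs ↦ ?_)⟩
  have : j ≤ s.sup id := le_sup (f := id) hjs
  have : s.sup id < j := (mem_Ioc.mp hj).1
  omega

theorem sub_sq_div_le_sum_Ioc_inv {a : ℕ → ℝ} (hpos : ∀ j, 0 < a j) {M N : ℕ} (hMN : M < N)
    {ε : ℝ} (htail : ∑ j ∈ Ioc M N, a j < ε) :
    ((N : ℝ) - M) ^ 2 / ε ≤ ∑ j ∈ Ioc M N, (a j)⁻¹ := by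
  have hcard : (#(Ioc M N) : ℝ) = N - M := by
    rw [Nat.card_Ioc, Nat.cast_sub hMN.le]
  have hpos_sum : 0 < ∑ j ∈ Ioc M N, a j :=
    sum_pos (fun j _ ↦ hpos j) (nonempty_Ioc.mpr hMN)
  calc ((N : ℝ) - M) ^ 2 / ε ≤ ((N : ℝ) - M) ^ 2 / ∑ j ∈ Ioc M N, a j := by
        gcongr
    _ ≤ ∑ j ∈ Ioc M N, (a j)⁻¹ := by
        rw [← hcard]; exact sq_card_div_sum_le_sum_inv _ fun j _ ↦ hpos j

/-- Lemma 2.3: if `(a_j)_{j ≥ 1}` are positive and summable, then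
`N⁻² ∑_{j=1}^N a_j⁻¹ → +∞` as `N → ∞`. -/
theorem stmt_0 (a : ℕ → ℝ) (hpos : ∀ j, 0 < a j) (hsum : Summable a) :
    Tendsto (fun N : ℕ => (1 / (N : ℝ) ^ 2) * ∑ j ∈ Finset.Icc 1 N, (a j)⁻¹)
      atTop atTop := by
  refine tendsto_atTop.mpr fun C ↦ ?_
  set D := max C 1
  have hD : 0 < D := lt_max_of_lt_right one_pos
  obtain ⟨M, hM⟩ := hsum.exists_sum_Ioc_lt (ε := (4 * D)⁻¹) (by positivity)
  filter_upwards [eventually_gt_atTop (2 * M)] with N hN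
  have hN_real : (2 * M : ℝ) < N := by exact_mod_cast hN
  have hblock := sub_sq_div_le_sum_Ioc_inv hpos (by omega) (hM N)
  have hsub : ∑ j ∈ Ioc M N, (a j)⁻¹ ≤ ∑ j ∈ Icc 1 N, (a j)⁻¹ :=
    sum_le_sum_of_subset_of_nonneg (fun j hj ↦ by simp only [mem_Ioc, mem_Icc] at hj ⊢; omega)
      fun j _ _ ↦ (inv_pos.mpr (hpos j)).le
  have hNpos : (0 : ℝ) < N := by linarith [(M.cast_nonneg : (0 : ℝ) ≤ M)]
  rw [div_inv_eq_mul] at hblock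
  rw [one_div, inv_mul_eq_div, le_div_iff₀ (by positivity)]
  have hN_sq : (N : ℝ) ^ 2 ≤ 4 * ((N : ℝ) - M) ^ 2 := by nlinarith [(M.cast_nonneg : (0 : ℝ) ≤ M)]
  nlinarith [le_max_left C 1, mul_le_mul_of_nonneg_left hN_sq hD.le]
end

section
/- There exists $\epsilon_0 > 0$ such that for every $\epsilon \in (0, \epsilon_0]$ the following holds. Let $t_0 \in \mathbb{R}$ and let $\alpha, \beta : [t_0, t_0+1] \to \mathbb{R}$ be differentiable functions satisfying $|\alpha'(t) - \cos\beta(t)\sin\alpha(t)| \le 0.01\,\epsilon$ and $|\beta'(t) + \cos\alpha(t)\sin\beta(t)| \le 0.01\,\epsilon$ for all $t \in [t_0, t_0+1]$. (1) If $|\alpha(t_0)| \le 3\epsilon$ and $|\beta(t_0)| \le 0.1$, then $|\beta(t)| \le 0.1$ for all $t \in [t_0, t_0+1]$ and $|\beta(t_0+1)| < 0.1$. (2) If moreover $2\epsilon < |\alpha(t_0)| \le 3\epsilon$, then $|\alpha(t_0+1)| > 3\epsilon$. -/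
/-!
Grönwall's inequality keeps `|α| ≤ 1` during the unit time step, so `cos α ≥ 1/2` and the
`β`-equation pushes `β²` strictly inward whenever `|β| = 0.1`; a barrier argument for `β²` then
keeps `|β| ≤ 0.1`. With `|β| ≤ 0.1` and `0 < α ≤ 1` one has `cos β sin α ≥ 2α/3`, so (for `α > 0`)
`α` stays above the solution of `w' = 2w/3 - 0.02ε`, `w(t₀) = 2ε`, which exceeds `3ε` at
`t₀ + 1` because `exp (2/3) ≥ 5/3`. The case `α(t₀) < -2ε` follows by the symmetry `α ↦ -α`.
-/

open Set Real

theorem one_sub_sq_div_two_le_cos_of_abs_le {x r : ℝ} (h : |x| ≤ r) : 1 - r ^ 2 / 2 ≤ cos x := by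
  have : x ^ 2 ≤ r ^ 2 := sq_le_sq' (abs_le.1 h).1 (abs_le.1 h).2
  linarith [one_sub_sq_div_two_le_cos (x := x)]

theorem two_thirds_mul_le_mul_sin {c x : ℝ} (hc : 4 / 5 ≤ c) (hx₀ : 0 < x) (hx₁ : x ≤ 1) :
    2 / 3 * x ≤ c * sin x := by
  have hsin : 5 / 6 * x ≤ sin x := by
    nlinarith [sin_gt_sub_cube hx₀, pow_le_one₀ hx₀.le hx₁ (n := 2)]
  nlinarith

theorem le_and_lt_of_deriv_neg_of_eq {F : ℝ → ℝ} {a b c : ℝ} (hab : a < b)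
    (hF : ∀ t ∈ Icc a b, DifferentiableAt ℝ F t) (ha : F a ≤ c)
    (hlevel : ∀ t ∈ Icc a b, F t = c → deriv F t < 0) :
    (∀ t ∈ Icc a b, F t ≤ c) ∧ F b < c := by
  have hle : ∀ t ∈ Icc a b, F t ≤ c := fun t ht =>
    image_le_of_deriv_right_lt_deriv_boundary (B := fun _ => c) (B' := fun _ => 0)
      (fun t ht => (hF t ht).continuousAt.continuousWithinAt)
      (fun t ht => (hF t (Ico_subset_Icc_self ht)).hasDerivAt.hasDerivWithinAt) ha
      (fun _ => hasDerivAt_const _ _)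
      (fun t ht => hlevel t (Ico_subset_Icc_self ht)) ht
  refine ⟨hle, (hle b (right_mem_Icc.2 hab.le)).lt_of_ne fun hFb => ?_⟩
  have hb : b ∈ Icc a b := right_mem_Icc.2 hab.le
  -- `b` maximises `F` on `[a, b]`, so the derivative there cannot be negative.
  have hmax : IsLocalMaxOn F (Icc a b) b :=
    IsMaxOn.localize fun t ht => (hle t ht).trans hFb.ge
  have hcone : a - b ∈ posTangentConeAt (Icc a b) b :=
    mem_posTangentConeAt_of_segment_subset (by
      rw [add_sub_cancel, segment_symm, segment_eq_Icc hab.le])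
  have hnonpos := hmax.hasFDerivWithinAt_nonpos
    (hF b hb).hasDerivAt.hasFDerivAt.hasFDerivWithinAt hcone
  simp only [ContinuousLinearMap.toSpanSingleton_apply, smul_eq_mul] at hnonpos
  nlinarith [hlevel b hb hFb]

theorem le_gronwallBound_neg {c K δ x : ℝ} (hK : 0 < K) (hδ : δ ≤ K * c) (hx : 0 ≤ x) :
    c ≤ gronwallBound c K (-δ) x := by
  have hδK : 0 ≤ c - δ / K := sub_nonneg.2 ((div_le_iff₀' hK).2 hδ)
  have hexp : 0 ≤ exp (K * x) - 1 := sub_nonneg.2 (one_le_exp (by positivity))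
  have hform : gronwallBound c K (-δ) x = c + (c - δ / K) * (exp (K * x) - 1) := by
    rw [gronwallBound_of_K_ne_0 hK.ne']
    ring
  rw [hform]
  nlinarith

-- `gronwallBound c K (-δ) (t - a)` is the solution of `w' = K w - δ`, `w a = c`.
theorem gronwallBound_neg_le_of_mul_sub_lt_deriv {f : ℝ → ℝ} {a b c K δ : ℝ} (hK : 0 < K)
    (hδ : δ ≤ K * c) (hf : ∀ t ∈ Icc a b, DifferentiableAt ℝ f t) (ha : c ≤ f a)
    (bound : ∀ t ∈ Icc a b, c ≤ f t → K * f t - δ < deriv f t) :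
    ∀ t ∈ Icc a b, gronwallBound c K (-δ) (t - a) ≤ f t := by
  refine image_le_of_deriv_right_lt_deriv_boundary'
    (fun t _ => (hasDerivAt_gronwallBound_shift c K (-δ) t a).continuousAt.continuousWithinAt)
    (fun t _ => (hasDerivAt_gronwallBound_shift c K (-δ) t a).hasDerivWithinAt)
    (by rwa [sub_self, gronwallBound_x0])
    (fun t ht => (hf t ht).continuousAt.continuousWithinAt)
    (fun t ht => (hf t (Ico_subset_Icc_self ht)).hasDerivAt.hasDerivWithinAt) ?_
  intro t ht heq
  have hc : c ≤ f t := heq ▸ le_gronwallBound_neg hK hδ (sub_nonneg.2 ht.1)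
  have := bound t (Ico_subset_Icc_self ht) hc
  rw [heq]
  linarith

theorem abs_le_gronwallBound_of_abs_deriv_sub_mul_sin_le {α c : ℝ → ℝ} {a b δ : ℝ}
    (hα : ∀ t ∈ Icc a b, DifferentiableAt ℝ α t) (hc : ∀ t ∈ Icc a b, |c t| ≤ 1)
    (hpert : ∀ t ∈ Icc a b, |deriv α t - c t * sin (α t)| ≤ δ) :
    ∀ t ∈ Icc a b, |α t| ≤ gronwallBound |α a| 1 δ (t - a) := by
  refine norm_le_gronwallBound_of_norm_deriv_right_le
    (fun t ht => (hα t ht).continuousAt.continuousWithinAt)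
    (fun t ht => (hα t (Ico_subset_Icc_self ht)).hasDerivAt.hasDerivWithinAt) le_rfl ?_
  intro t ht
  have ht' := Ico_subset_Icc_self ht
  have hfield : |c t * sin (α t)| ≤ |α t| := by
    rw [abs_mul]
    exact (mul_le_of_le_one_left (abs_nonneg _) (hc t ht')).trans abs_sin_le_abs
  have := abs_sub_abs_le_abs_sub (deriv α t) (c t * sin (α t))
  simp only [Real.norm_eq_abs]
  linarith [hpert t ht']

theorem abs_le_one_of_abs_deriv_sub_mul_sin_le {α c : ℝ → ℝ} {a ε : ℝ}
    (hε₀ : ε ≤ 1 / 10) (hα : ∀ t ∈ Icc a (a + 1), DifferentiableAt ℝ α t)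
    (hc : ∀ t ∈ Icc a (a + 1), |c t| ≤ 1)
    (hpert : ∀ t ∈ Icc a (a + 1), |deriv α t - c t * sin (α t)| ≤ 0.01 * ε)
    (ha : |α a| ≤ 3 * ε) : ∀ t ∈ Icc a (a + 1), |α t| ≤ 1 := by
  intro t ht
  have hε : 0 ≤ ε := by linarith [abs_nonneg (α a)]
  have hg := abs_le_gronwallBound_of_abs_deriv_sub_mul_sin_le hα hc hpert t ht
  rw [gronwallBound_of_K_ne_0 one_ne_zero] at hg
  have hexp : exp (1 * (t - a)) ≤ 2.72 :=
    (exp_le_exp.2 (by linarith [ht.2])).trans (exp_one_lt_d9.trans (by norm_num)).le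
  nlinarith [mul_le_mul ha hexp (exp_pos _).le (by linarith)]

theorem abs_le_and_lt_of_abs_deriv_add_mul_sin_le {β c : ℝ → ℝ} {a b r δ : ℝ} (hab : a < b)
    (hr : 0 < r) (hβ : ∀ t ∈ Icc a b, DifferentiableAt ℝ β t)
    (hpert : ∀ t ∈ Icc a b, |deriv β t + c t * sin (β t)| ≤ δ)
    (hδ : ∀ t ∈ Icc a b, δ < c t * sin r) (ha : |β a| ≤ r) :
    (∀ t ∈ Icc a b, |β t| ≤ r) ∧ |β b| < r := by
  have hlevel : ∀ t ∈ Icc a b, β t ^ 2 = r ^ 2 → deriv (fun s => β s ^ 2) t < 0 := by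
    intro t ht hsq
    have hder : deriv (fun s => β s ^ 2) t = 2 * β t * deriv β t := by
      rw [((hβ t ht).hasDerivAt.fun_pow 2).deriv]
      ring
    have habs : |β t| = r := by rw [← abs_of_pos hr, ← sq_eq_sq_iff_abs_eq_abs, hsq]
    -- On the level set `β sin β = r sin r`, so `(β²)' ≤ 2r (δ - c sin r) < 0`.
    have hsin : β t * sin (β t) = r * sin r := by
      rcases (abs_eq hr.le).1 habs with h | h <;> rw [h]
      rw [sin_neg, neg_mul_neg]
    have hμ : β t * (deriv β t + c t * sin (β t)) ≤ r * δ :=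
      calc β t * (deriv β t + c t * sin (β t))
          ≤ |β t| * |deriv β t + c t * sin (β t)| := by rw [← abs_mul]; exact le_abs_self _
        _ ≤ r * δ := by rw [habs]; exact mul_le_mul_of_nonneg_left (hpert t ht) hr.le
    have hsplit : β t * deriv β t
        = β t * (deriv β t + c t * sin (β t)) - c t * (β t * sin (β t)) := by ring
    rw [hder, mul_assoc, hsplit, hsin]
    nlinarith [mul_lt_mul_of_pos_left (hδ t ht) hr]
  obtain ⟨hle, hlt⟩ := le_and_lt_of_deriv_neg_of_eq hab
    (fun t ht => (hβ t ht).pow 2) (sq_le_sq' (abs_le.1 ha).1 (abs_le.1 ha).2) hlevel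
  exact ⟨fun t ht => abs_le_of_sq_le_sq (hle t ht) hr.le, abs_lt_of_sq_lt_sq hlt hr.le⟩

theorem abs_deriv_neg_sub_mul_sin_neg (α : ℝ → ℝ) (c t : ℝ) :
    |deriv (fun s => -α s) t - c * sin (-α t)| = |deriv α t - c * sin (α t)| := by
  rw [deriv.fun_neg, sin_neg, ← abs_neg]
  ring_nf

theorem three_mul_lt_of_two_mul_le_of_abs_deriv_sub_mul_sin_le {α c : ℝ → ℝ} {a ε : ℝ}
    (hε : 0 < ε) (hα : ∀ t ∈ Icc a (a + 1), DifferentiableAt ℝ α t)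
    (hc : ∀ t ∈ Icc a (a + 1), 4 / 5 ≤ c t)
    (hpert : ∀ t ∈ Icc a (a + 1), |deriv α t - c t * sin (α t)| ≤ 0.01 * ε)
    (hα₁ : ∀ t ∈ Icc a (a + 1), α t ≤ 1) (ha : 2 * ε ≤ α a) : 3 * ε < α (a + 1) := by
  have hw := gronwallBound_neg_le_of_mul_sub_lt_deriv (K := 2 / 3) (δ := 0.02 * ε)
    (by norm_num) (by linarith) hα ha ?_ (a + 1) ⟨by linarith, le_rfl⟩
  · rw [add_sub_cancel_left, gronwallBound_of_K_ne_0 (by norm_num)] at hw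
    have hexp := add_one_le_exp (2 / 3 * 1)
    nlinarith [mul_le_mul_of_nonneg_left hexp hε.le]
  · intro t ht h2
    have hfield := two_thirds_mul_le_mul_sin (hc t ht) (by linarith) (hα₁ t ht)
    linarith [(abs_le.1 (hpert t ht)).1]

/-- Lemma 2.5: for the perturbed hyperbolic system
`α' ≈ cos β sin α`, `β' ≈ -cos α sin β` (perturbation of size `0.01 ε`),
trajectories starting with `|α| ≤ 3ε`, `|β| ≤ 0.1` keep `|β| ≤ 0.1` up to
time `t₀ + 1` (with `|β(t₀+1)| < 0.1`), and if moreover `|α(t₀)| > 2ε`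
then `|α(t₀+1)| > 3ε`. -/
theorem stmt_6 :
    ∃ ε₀ : ℝ, 0 < ε₀ ∧
      ∀ ε : ℝ, 0 < ε → ε ≤ ε₀ →
        ∀ (t₀ : ℝ) (α β : ℝ → ℝ),
          (∀ t ∈ Set.Icc t₀ (t₀ + 1), DifferentiableAt ℝ α t) →
          (∀ t ∈ Set.Icc t₀ (t₀ + 1), DifferentiableAt ℝ β t) →
          (∀ t ∈ Set.Icc t₀ (t₀ + 1),
            |deriv α t - Real.cos (β t) * Real.sin (α t)| ≤ 0.01 * ε) →
          (∀ t ∈ Set.Icc t₀ (t₀ + 1),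
            |deriv β t + Real.cos (α t) * Real.sin (β t)| ≤ 0.01 * ε) →
          (|α t₀| ≤ 3 * ε → |β t₀| ≤ 0.1 →
            ((∀ t ∈ Set.Icc t₀ (t₀ + 1), |β t| ≤ 0.1) ∧ |β (t₀ + 1)| < 0.1)) ∧
          (|α t₀| ≤ 3 * ε → |β t₀| ≤ 0.1 → 2 * ε < |α t₀| →
            3 * ε < |α (t₀ + 1)|) := by
  refine ⟨1 / 10, by norm_num, fun ε hε hε₀ t₀ α β hα hβ hpα hpβ => ?_⟩
  have hα₁ : |α t₀| ≤ 3 * ε → ∀ t ∈ Icc t₀ (t₀ + 1), |α t| ≤ 1 :=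
    abs_le_one_of_abs_deriv_sub_mul_sin_le (c := fun t => cos (β t)) hε₀ hα
      (fun t _ => abs_cos_le_one (β t)) hpα
  have hβ₁ : |α t₀| ≤ 3 * ε → |β t₀| ≤ 0.1 →
      (∀ t ∈ Icc t₀ (t₀ + 1), |β t| ≤ 0.1) ∧ |β (t₀ + 1)| < 0.1 := by
    intro h hβ₀
    refine abs_le_and_lt_of_abs_deriv_add_mul_sin_le (c := fun t => cos (α t)) (by linarith)
      (by norm_num) hβ hpβ (fun t ht => ?_) hβ₀
    have hcos := one_sub_sq_div_two_le_cos_of_abs_le (hα₁ h t ht)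
    have hsin := sin_gt_sub_cube (x := 0.1) (by norm_num)
    nlinarith
  refine ⟨hβ₁, fun h hβ₀ h2 => ?_⟩
  have hc : ∀ t ∈ Icc t₀ (t₀ + 1), 4 / 5 ≤ cos (β t) := fun t ht =>
    le_trans (by norm_num) (one_sub_sq_div_two_le_cos_of_abs_le ((hβ₁ h hβ₀).1 t ht))
  rcases lt_abs.1 h2 with hpos | hneg
  · exact (three_mul_lt_of_two_mul_le_of_abs_deriv_sub_mul_sin_le hε hα hc hpα
      (fun t ht => (abs_le.1 (hα₁ h t ht)).2) hpos.le).trans_le (le_abs_self _)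
  · exact (three_mul_lt_of_two_mul_le_of_abs_deriv_sub_mul_sin_le (α := fun s => -α s) hε
      (fun t ht => (hα t ht).neg) hc
      (fun t ht => (abs_deriv_neg_sub_mul_sin_neg α _ t).trans_le (hpα t ht))
      (fun t ht => neg_le.1 (abs_le.1 (hα₁ h t ht)).1) hneg.le).trans_le (neg_le_abs _)
end

section
/- There exists $\epsilon_0 > 0$ with the following property. Let $f_1, f_2, g_1, g_2 : \mathbb{R}^2 \times [0,\infty) \to \mathbb{R}$ be continuously differentiable functions with $\sup |f_i| < \epsilon_0$ and $\sup |g_i| < \epsilon_0$ for $i = 1,2$. Then for every $r > 0$ there exist $\alpha_0, \beta_0 \in \mathbb{R}$ with $0 < \beta_0$ and $\alpha_0^2 + \beta_0^2 < r^2$, and differentiable functions $\alpha, \beta : [0,\infty) \to \mathbb{R}$ with $\alpha(0) = \alpha_0$, $\beta(0) = \beta_0$, satisfying for all $t \ge 0$: $$\alpha'(t) = \alpha(t)\,(1 + f_1(\alpha(t),\beta(t),t)) + f_2(\alpha(t),\beta(t),t)\,\beta(t),$$ $$\beta'(t) = -\beta(t)\,(1 + g_1(\alpha(t),\beta(t),t))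 + g_2(\alpha(t),\beta(t),t)\,\alpha(t),$$ and $|\alpha(t)| \le e^{-t/2}\,\beta_0$ and $|\beta(t)| \le e^{-t/2}\,\beta_0$. -/
/-!
A shooting argument in the spirit of Ważewski. Inside the truncated cone `|α| ≤ β ≤ c` the
smallness of the perturbation gives `-2β ≤ β' ≤ -β/2`; on the sides `α = ±β` the field points
strictly out of the cone and on the lid `β = c` strictly into it. Start on the lid at `(a, c)`
with `a ∈ [-c, c]`. The initial values whose solution leaves through the side `α = β` form an
open set containing `c`, those whose solution leaves through `α = -β` a disjoint open set
containing `-c`. Since `[-c, c]` is connected, some solution never leaves the cone, and then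
`|α| ≤ β ≤ c e^{-t/2}`. The reflection `α ↦ -α` preserves the class of systems and swaps the
two sides, so only the side `α = β` has to be analysed. Solutions exist for all times because
the state can be clamped to the square `[-c, c]²` without changing the field inside the cone.
-/

open Set Filter Topology Metric Real Function
open scoped NNReal

theorem HasDerivWithinAt.eventually_lt_of_pos {f : ℝ → ℝ} {f' x : ℝ}
    (hf : HasDerivWithinAt f f' (Ici x) x) (hf' : 0 < f') : ∀ᶠ z in 𝓝[>] x, f x < f z := by
  have h := ((hasDerivWithinAt_iff_tendsto_slope' (lt_irrefl x)).1 hf.Ioi_of_Ici).eventually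
    (lt_mem_nhds hf')
  filter_upwards [h, self_mem_nhdsWithin] with z hslope (hz : x < z)
  rw [slope_def_field, lt_div_iff₀ (sub_pos.2 hz)] at hslope
  linarith

theorem ContinuousOn.eventually_nhdsGT_lt {f g : ℝ → ℝ} {a t : ℝ} (hf : ContinuousOn f (Ici a))
    (hg : ContinuousOn g (Ici a)) (ht : a ≤ t) (hfg : f t < g t) : ∀ᶠ z in 𝓝[>] t, f z < g z :=
  Tendsto.eventually_lt ((hf t ht).mono (Ioi_subset_Ici ht)) ((hg t ht).mono (Ioi_subset_Ici ht))
    hfg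

theorem le_mul_exp_of_hasDerivWithinAt_le {f f' : ℝ → ℝ} {δ K a b : ℝ}
    (hf : ContinuousOn f (Icc a b)) (hf' : ∀ x ∈ Ico a b, HasDerivWithinAt f (f' x) (Ici x) x)
    (ha : f a ≤ δ) (bound : ∀ x ∈ Ico a b, f' x ≤ K * f x) :
    ∀ x ∈ Icc a b, f x ≤ δ * exp (K * (x - a)) := by
  intro x hx
  simpa [gronwallBound_ε0] using le_gronwallBound_of_liminf_deriv_right_le (ε := 0) hf
    (fun x hx r hr => (hf' x hx).liminf_right_slope_le hr) ha (by simpa using bound) x hx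

theorem isOpen_setOf_mapsTo {ι A X : Type*} [TopologicalSpace ι] [PseudoMetricSpace A]
    [PseudoMetricSpace X] {φ : A → ι → X} {S : Set ι} (hS : IsCompact S)
    (hφ : ∀ a, ContinuousOn (φ a) S) {K : ℝ≥0} (hK : ∀ s ∈ S, LipschitzWith K (φ · s))
    {V : Set X} (hV : IsOpen V) : IsOpen {a | MapsTo (φ a) S V} := by
  refine Metric.isOpen_iff.2 fun a ha => ?_
  obtain ⟨δ, hδ, hsub⟩ :=
    (hS.image_of_continuousOn (hφ a)).exists_thickening_subset_open hV ha.image_subset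
  refine ⟨δ / (K + 1), by positivity, fun a' ha' s hs => hsub ?_⟩
  rw [mem_ball, lt_div_iff₀ (by positivity)] at ha'
  refine mem_thickening_iff.2 ⟨φ a s, mem_image_of_mem _ hs, ?_⟩
  calc dist (φ a' s) (φ a s) ≤ K * dist a' a := (hK s hs).dist_le_mul a' a
    _ ≤ dist a' a * (K + 1) := by nlinarith [dist_nonneg (x := a') (y := a)]
    _ < δ := ha'

theorem isOpen_setOf_exists_mem_mapsTo {A X : Type*} [PseudoMetricSpace A] [PseudoMetricSpace X]
    {φ : A → ℝ → X} (hφ : ∀ a, ContinuousOn (φ a) (Ici 0))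
    (hK : ∀ T, ∃ K : ℝ≥0, ∀ t ∈ Icc 0 T, LipschitzWith K (φ · t)) {U V : Set X}
    (hU : IsOpen U) (hV : IsOpen V) :
    IsOpen {a | ∃ τ ≥ 0, φ a τ ∈ U ∧ MapsTo (φ a) (Icc 0 τ) V} := by
  refine isOpen_iff_forall_mem_open.2 fun a ⟨τ, hτ, haU, haV⟩ => ?_
  obtain ⟨K, hK⟩ := hK τ
  refine ⟨{a | φ a τ ∈ U} ∩ {a | MapsTo (φ a) (Icc 0 τ) V}, fun a' ha' => ⟨τ, hτ, ha'⟩, ?_,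
    haU, haV⟩
  exact (hU.preimage (hK τ ⟨hτ, le_rfl⟩).continuous).inter
    (isOpen_setOf_mapsTo isCompact_Icc (fun a => (hφ a).mono Icc_subset_Ici_self) hK hV)

section GlobalExistence

variable {E : Type*} [NormedAddCommGroup E] [NormedSpace ℝ E] {v : ℝ → E → E} {K : ℝ≥0}

theorem IsIntegralCurveOn.dist_le_of_lipschitzWith {γ γ' : ℝ → E} {a b : ℝ}
    (hv : ∀ t ∈ Icc a b, LipschitzWith K (v t)) (hγ : IsIntegralCurveOn γ v (Icc a b))
    (hγ' : IsIntegralCurveOn γ' v (Icc a b)) :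
    ∀ t ∈ Icc a b, dist (γ t) (γ' t) ≤ dist (γ a) (γ' a) * exp (K * (t - a)) := by
  have hright {δ : ℝ → E} (hδ : IsIntegralCurveOn δ v (Icc a b)) :
      ∀ t ∈ Ico a b, HasDerivWithinAt δ (v t (δ t)) (Ici t) t := fun t ht =>
    (hδ t (Ico_subset_Icc_self ht)).mono_of_mem_nhdsWithin (Icc_mem_nhdsGE_of_mem ht)
  exact dist_le_of_trajectories_ODE_of_mem (s := fun _ => univ)
    (fun t ht => (hv t (Ico_subset_Icc_self ht)).lipschitzOnWith) hγ.continuousOn (hright hγ)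
    (fun _ _ => trivial) hγ'.continuousOn (hright hγ') (fun _ _ => trivial) le_rfl

theorem exists_lipschitzWith_of_isIntegralCurveOn
    (hv : ∀ T, ∃ K : ℝ≥0, ∀ t ∈ Icc 0 T, LipschitzWith K (v t)) {γ : E → ℝ → E}
    (hγ0 : ∀ x, γ x 0 = x) (hγ : ∀ x, IsIntegralCurveOn (γ x) v (Ici 0)) (T : ℝ) :
    ∃ K : ℝ≥0, ∀ t ∈ Icc 0 T, LipschitzWith K (γ · t) := by
  obtain ⟨K, hK⟩ := hv T
  refine ⟨⟨exp (K * T), (exp_pos _).le⟩, fun t ht => LipschitzWith.of_dist_le_mul fun x y => ?_⟩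
  have hdist := ((hγ x).mono Icc_subset_Ici_self).dist_le_of_lipschitzWith hK
    ((hγ y).mono Icc_subset_Ici_self) t ht
  rw [hγ0, hγ0, sub_zero] at hdist
  calc dist (γ x t) (γ y t) ≤ dist x y * exp (K * t) := hdist
    _ ≤ exp (K * T) * dist x y := by
      rw [mul_comm]
      gcongr
      exact ht.2

variable [CompleteSpace E]

theorem exists_isIntegralCurveOn_Icc {T : ℝ} (hT : 0 ≤ T) {L : ℝ≥0}
    (hcont : ∀ x, ContinuousOn (v · x) (Icc 0 T)) (hbound : ∀ t ∈ Icc 0 T, ∀ x, ‖v t x‖ ≤ L)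
    (hlip : ∀ t ∈ Icc 0 T, LipschitzWith K (v t)) (x₀ : E) :
    ∃ γ, γ 0 = x₀ ∧ IsIntegralCurveOn γ v (Icc 0 T) :=
  IsPicardLindelof.exists_eq_forall_mem_Icc_hasDerivWithinAt₀ (t₀ := ⟨0, left_mem_Icc.2 hT⟩)
    (a := L * T.toNNReal)
    { lipschitzOnWith := fun t ht => (hlip t ht).lipschitzOnWith
      continuousOn := fun x _ => hcont x
      norm_le := fun t ht x _ => hbound t ht x
      mul_max_le := by simp [hT] }

theorem exists_isIntegralCurveOn_Ici (hcont : ∀ x, ContinuousOn (v · x) (Ici 0))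
    (hbound : ∀ T, ∃ L : ℝ≥0, ∀ t ∈ Icc 0 T, ∀ x, ‖v t x‖ ≤ L)
    (hlip : ∀ T, ∃ K : ℝ≥0, ∀ t ∈ Icc 0 T, LipschitzWith K (v t)) (x₀ : E) :
    ∃ γ, γ 0 = x₀ ∧ IsIntegralCurveOn γ v (Ici 0) := by
  choose L hL using hbound
  choose K hK using hlip
  choose γ hγ0 hγ using fun n : ℕ => exists_isIntegralCurveOn_Icc n.cast_nonneg
    (fun x => (hcont x).mono Icc_subset_Ici_self) (hL n) (hK n) x₀
  have hagree {m n : ℕ} (hmn : m ≤ n) : EqOn (γ m) (γ n) (Icc 0 m) := fun t ht => by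
    have hsub : Icc (0 : ℝ) m ⊆ Icc 0 n := Icc_subset_Icc_right (by exact_mod_cast hmn)
    simpa [hγ0] using (hγ m).dist_le_of_lipschitzWith (hK m) ((hγ n).mono hsub) t ht
  refine ⟨fun t => γ (⌈t⌉₊ + 1) t, hγ0 _, fun t ht => ?_⟩
  set n := ⌈t⌉₊ + 1
  have hlt {s : ℝ} : s < (⌈s⌉₊ + 1 : ℕ) := by push_cast; linarith [Nat.le_ceil s]
  have heq : EqOn (fun s => γ (⌈s⌉₊ + 1) s) (γ n) (Icc 0 n) := fun s hs => by
    rcases le_total (⌈s⌉₊ + 1) n with h | h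
    · exact hagree h ⟨hs.1, hlt.le⟩
    · exact (hagree h hs).symm
  have hmem : t ∈ Icc (0 : ℝ) n := ⟨ht, hlt.le⟩
  have hnhds : Icc (0 : ℝ) n ∈ 𝓝[Ici 0] t :=
    mem_nhdsWithin.2 ⟨Iio n, isOpen_Iio, hlt, fun z hz => ⟨hz.2, hz.1.le⟩⟩
  rw [heq hmem]
  exact ((hγ n t hmem).congr heq (heq hmem)).mono_of_mem_nhdsWithin hnhds

end GlobalExistence

section Cone

/-- The perturbation terms enter only through their values along the solution, so here they are
functions of time. -/
def SolvesAt (f₁ f₂ g₁ g₂ α β : ℝ → ℝ) (t : ℝ) : Prop :=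
  HasDerivWithinAt α (α t * (1 + f₁ t) + f₂ t * β t) (Ici 0) t ∧
    HasDerivWithinAt β (-β t * (1 + g₁ t) + g₂ t * α t) (Ici 0) t

def cone (c : ℝ) : Set (ℝ × ℝ) := {p | |p.1| ≤ p.2 ∧ p.2 ≤ c}

theorem isClosed_cone (c : ℝ) : IsClosed (cone c) :=
  (isClosed_le continuous_fst.abs continuous_snd).inter
    (isClosed_le continuous_snd continuous_const)

theorem cone_subset_closedBall (c : ℝ) : cone c ⊆ closedBall 0 c := fun p hp => by
  rw [mem_closedBall_zero_iff, Prod.norm_def, Real.norm_eq_abs, Real.norm_eq_abs,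
    abs_of_nonneg ((abs_nonneg _).trans hp.1)]
  exact max_le (hp.1.trans hp.2) hp.2

/-- `(α, β)` crosses the side `α = β` of the cone while staying strictly on one side of
`α = -β`; `ExitsRight (-α) β` is the mirror statement, crossing `α = -β`. -/
def ExitsRight (α β : ℝ → ℝ) : Prop :=
  ∃ τ ≥ 0, β τ < α τ ∧ ∀ s ∈ Icc 0 τ, 0 < α s + β s

variable {f₁ f₂ g₁ g₂ α β : ℝ → ℝ}

theorem ExitsRight.not_exitsRight_neg (h : ExitsRight α β) : ¬ExitsRight (-α) β := by
  rintro ⟨τ₂, hτ₂, hexit₂, hside₂⟩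
  obtain ⟨τ₁, hτ₁, hexit₁, hside₁⟩ := h
  rcases le_total τ₁ τ₂ with hle | hle
  · have := hside₂ τ₁ ⟨hτ₁, hle⟩
    simp only [Pi.neg_apply] at this
    linarith
  · have := hside₁ τ₂ ⟨hτ₂, hle⟩
    simp only [Pi.neg_apply] at hexit₂
    linarith

theorem SolvesAt.neg {t : ℝ} (h : SolvesAt f₁ f₂ g₁ g₂ α β t) :
    SolvesAt f₁ (-f₂) g₁ (-g₂) (-α) β t :=
  ⟨h.1.neg.congr_deriv (by simp only [Pi.neg_apply]; ring),
    h.2.congr_deriv (by simp only [Pi.neg_apply]; ring)⟩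

theorem rhs_snd_bounds {a b g₁ g₂ : ℝ} (hg₁ : |g₁| ≤ 1 / 8) (hg₂ : |g₂| ≤ 1 / 8) (hab : |a| ≤ b) :
    -2 * b ≤ -b * (1 + g₁) + g₂ * a ∧ -b * (1 + g₁) + g₂ * a ≤ -(1 / 2) * b := by
  have hb : 0 ≤ b := (abs_nonneg a).trans hab
  have hprod : |g₂ * a| ≤ 1 / 8 * b := by
    rw [abs_mul]
    exact mul_le_mul hg₂ hab (abs_nonneg a) (by norm_num)
  obtain ⟨hg₁l, hg₁u⟩ := abs_le.1 hg₁
  obtain ⟨hpl, hpu⟩ := abs_le.1 hprod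
  constructor <;> nlinarith

theorem rhs_fst_sub_rhs_snd_pos {b f₁ f₂ g₁ g₂ : ℝ} (hf₁ : |f₁| ≤ 1 / 8) (hf₂ : |f₂| ≤ 1 / 8)
    (hg₁ : |g₁| ≤ 1 / 8) (hg₂ : |g₂| ≤ 1 / 8) (hb : 0 < b) :
    0 < b * (1 + f₁) + f₂ * b - (-b * (1 + g₁) + g₂ * b) := by
  have : 0 < 2 + f₁ + f₂ + g₁ - g₂ := by
    linarith [(abs_le.1 hf₁).1, (abs_le.1 hf₂).1, (abs_le.1 hg₁).1, (abs_le.1 hg₂).2]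
  nlinarith

theorem decay_bounds_of_forall_abs_le (hg₁ : ∀ t, |g₁ t| ≤ 1 / 8) (hg₂ : ∀ t, |g₂ t| ≤ 1 / 8)
    {t : ℝ} (ht : 0 ≤ t)
    (hβ : ∀ s ∈ Icc 0 t, HasDerivWithinAt β (-β s * (1 + g₁ s) + g₂ s * α s) (Ici 0) s)
    (hcone : ∀ s ∈ Icc 0 t, |α s| ≤ β s) :
    exp (-2 * t) * β 0 ≤ β t ∧ β t ≤ exp (-t / 2) * β 0 := by
  have hcont : ContinuousOn β (Icc 0 t) := fun s hs =>
    (hβ s hs).continuousWithinAt.mono Icc_subset_Ici_self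
  have hright : ∀ s ∈ Ico 0 t, HasDerivWithinAt β _ (Ici s) s := fun s hs =>
    (hβ s (Ico_subset_Icc_self hs)).mono (Ici_subset_Ici.2 hs.1)
  have hrhs := fun s (hs : s ∈ Ico 0 t) =>
    rhs_snd_bounds (hg₁ s) (hg₂ s) (hcone s (Ico_subset_Icc_self hs))
  have hlower := le_mul_exp_of_hasDerivWithinAt_le hcont.neg (fun s hs => (hright s hs).neg)
    le_rfl (K := -2) (fun s hs => by simp only [Pi.neg_apply]; linarith [(hrhs s hs).1])
    t ⟨ht, le_rfl⟩
  have hupper := le_mul_exp_of_hasDerivWithinAt_le hcont hright le_rfl (K := -(1 / 2))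
    (fun s hs => (hrhs s hs).2) t ⟨ht, le_rfl⟩
  simp only [Pi.neg_apply, sub_zero] at hlower hupper
  constructor
  · linarith
  · convert hupper using 1
    ring_nf

theorem SolvesAt.lt_of_forall_le {s t : ℝ} (hsol : SolvesAt f₁ f₂ g₁ g₂ α β s)
    (hf₁ : ∀ t, |f₁ t| ≤ 1 / 8) (hf₂ : ∀ t, |f₂ t| ≤ 1 / 8) (hg₁ : ∀ t, |g₁ t| ≤ 1 / 8)
    (hg₂ : ∀ t, |g₂ t| ≤ 1 / 8) (hs : 0 ≤ s) (hst : s < t)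
    (hle : ∀ r ∈ Ico s t, α r ≤ β r) (hβ : 0 < β s) : α s < β s := by
  refine (hle s ⟨le_rfl, hst⟩).lt_of_ne fun heq => ?_
  have hu := (hsol.1.sub hsol.2).mono (Ici_subset_Ici.2 hs)
  have hpos : 0 < α s * (1 + f₁ s) + f₂ s * β s - (-β s * (1 + g₁ s) + g₂ s * α s) := by
    rw [heq]
    exact rhs_fst_sub_rhs_snd_pos (hf₁ s) (hf₂ s) (hg₁ s) (hg₂ s) hβ
  obtain ⟨z, hz, hzs⟩ := ((hu.eventually_lt_of_pos hpos).and (Ioo_mem_nhdsGT hst)).exists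
  have := hle z ⟨hzs.1.le, hzs.2⟩
  simp only [Pi.sub_apply] at hz
  linarith

theorem exitsRight_of_eq (hf₁ : ∀ t, |f₁ t| ≤ 1 / 8) (hf₂ : ∀ t, |f₂ t| ≤ 1 / 8)
    (hg₁ : ∀ t, |g₁ t| ≤ 1 / 8) (hg₂ : ∀ t, |g₂ t| ≤ 1 / 8) (hα : ContinuousOn α (Ici 0))
    (hβ : ContinuousOn β (Ici 0)) {t : ℝ} (ht : 0 ≤ t)
    (hsol : ∀ s ∈ Icc 0 t, SolvesAt f₁ f₂ g₁ g₂ α β s) (hcone : ∀ s ∈ Icc 0 t, |α s| ≤ β s)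
    (hpos : ∀ s ∈ Icc 0 t, 0 < β s) (heq : α t = β t) : ExitsRight α β := by
  have hside : ∀ s ∈ Icc 0 t, 0 < α s + β s := by
    intro s hs
    rcases hs.2.lt_or_eq with hst | rfl
    · have := (hsol s hs).neg.lt_of_forall_le hf₁ (fun t => by simpa using hf₂ t) hg₁
        (fun t => by simpa using hg₂ t) hs.1 hst
        (fun r hr => (neg_le_abs _).trans (hcone r ⟨hs.1.trans hr.1, hr.2.le⟩)) (hpos s hs)
      simp only [Pi.neg_apply] at this
      linarith
    · linarith [hpos s hs]
  have hsolt := hsol t ⟨ht, le_rfl⟩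
  have hu := (hsolt.1.sub hsolt.2).mono (Ici_subset_Ici.2 ht)
  have hu' : 0 < α t * (1 + f₁ t) + f₂ t * β t - (-β t * (1 + g₁ t) + g₂ t * α t) := by
    rw [heq]
    exact rhs_fst_sub_rhs_snd_pos (hf₁ t) (hf₂ t) (hg₁ t) (hg₂ t) (hpos t ⟨ht, le_rfl⟩)
  obtain ⟨u, hut, hsub⟩ := mem_nhdsGT_iff_exists_Ioo_subset.1 ((hu.eventually_lt_of_pos hu').and
    (continuousOn_const.eventually_nhdsGT_lt (hα.add hβ) ht (hside t ⟨ht, le_rfl⟩)))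
  have hmid : (t + u) / 2 ∈ Ioo t u := ⟨by linarith [mem_Ioi.1 hut], by linarith [mem_Ioi.1 hut]⟩
  refine ⟨(t + u) / 2, ht.trans hmid.1.le, ?_, fun s hs => ?_⟩
  · have := (hsub hmid).1
    simp only [Pi.sub_apply, heq, sub_self] at this
    linarith
  · rcases le_or_gt s t with hst | hts
    · exact hside s ⟨hs.1, hst⟩
    · exact (hsub ⟨hts, hs.2.trans_lt hmid.2⟩).2

theorem exitsRight_neg_of_eq (hf₁ : ∀ t, |f₁ t| ≤ 1 / 8) (hf₂ : ∀ t, |f₂ t| ≤ 1 / 8)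
    (hg₁ : ∀ t, |g₁ t| ≤ 1 / 8) (hg₂ : ∀ t, |g₂ t| ≤ 1 / 8) (hα : ContinuousOn α (Ici 0))
    (hβ : ContinuousOn β (Ici 0)) {t : ℝ} (ht : 0 ≤ t)
    (hsol : ∀ s ∈ Icc 0 t, SolvesAt f₁ f₂ g₁ g₂ α β s) (hcone : ∀ s ∈ Icc 0 t, |α s| ≤ β s)
    (hpos : ∀ s ∈ Icc 0 t, 0 < β s) (heq : α t = -β t) : ExitsRight (-α) β :=
  exitsRight_of_eq hf₁ (fun t => by simpa using hf₂ t) hg₁ (fun t => by simpa using hg₂ t)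
    hα.neg hβ ht (fun s hs => (hsol s hs).neg) (fun s hs => by simpa using hcone s hs) hpos
    (by simp [heq])

theorem forall_mem_cone_of_not_exitsRight (hf₁ : ∀ t, |f₁ t| ≤ 1 / 8)
    (hf₂ : ∀ t, |f₂ t| ≤ 1 / 8) (hg₁ : ∀ t, |g₁ t| ≤ 1 / 8) (hg₂ : ∀ t, |g₂ t| ≤ 1 / 8) {c : ℝ}
    (hα : ContinuousOn α (Ici 0)) (hβ : ContinuousOn β (Ici 0))
    (hsol : ∀ t ≥ 0, (α t, β t) ∈ cone c → SolvesAt f₁ f₂ g₁ g₂ α β t)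
    (h0 : (α 0, β 0) ∈ cone c) (hβ0 : 0 < β 0) (hR : ¬ExitsRight α β)
    (hL : ¬ExitsRight (-α) β) : ∀ t ≥ 0, (α t, β t) ∈ cone c := by
  intro T hT
  have hclosed : IsClosed ({t | (α t, β t) ∈ cone c} ∩ Icc 0 T) := by
    rw [inter_comm]
    exact ((hα.mono Icc_subset_Ici_self).prodMk
      (hβ.mono Icc_subset_Ici_self)).preimage_isClosed_of_isClosed isClosed_Icc (isClosed_cone c)
  refine hclosed.Icc_subset_of_forall_mem_nhdsGT_of_Icc_subset h0 (fun t ht hgood => ?_)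
    ⟨hT, le_rfl⟩
  have hsolt : ∀ s ∈ Icc 0 t, SolvesAt f₁ f₂ g₁ g₂ α β s := fun s hs => hsol s hs.1 (hgood hs)
  have hcone : ∀ s ∈ Icc 0 t, |α s| ≤ β s := fun s hs => (hgood hs).1
  have hpos : ∀ s ∈ Icc 0 t, 0 < β s := fun s hs =>
    (mul_pos (exp_pos _) hβ0).trans_le (decay_bounds_of_forall_abs_le hg₁ hg₂ hs.1
      (fun r hr => (hsolt r ⟨hr.1, hr.2.trans hs.2⟩).2)
      (fun r hr => hcone r ⟨hr.1, hr.2.trans hs.2⟩)).1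
  have htt : t ∈ Icc 0 t := ⟨ht.1, le_rfl⟩
  obtain ⟨hleft, hright⟩ := abs_le.1 (hcone t htt)
  have hright' : α t < β t := hright.lt_of_ne fun heq =>
    hR (exitsRight_of_eq hf₁ hf₂ hg₁ hg₂ hα hβ ht.1 hsolt hcone hpos heq)
  have hleft' : -β t < α t := hleft.lt_of_ne fun heq =>
    hL (exitsRight_neg_of_eq hf₁ hf₂ hg₁ hg₂ hα hβ ht.1 hsolt hcone hpos heq.symm)
  have hcap : ∀ᶠ z in 𝓝[>] t, β z ≤ c := by
    rcases (hgood htt).2.lt_or_eq with hlt | heq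
    · exact (hβ.eventually_nhdsGT_lt continuousOn_const ht.1 hlt).mono fun z hz => hz.le
    · have hdecr : 0 < -(-β t * (1 + g₁ t) + g₂ t * α t) := by
        linarith [(rhs_snd_bounds (hg₁ t) (hg₂ t) (hcone t htt)).2, hpos t htt]
      filter_upwards [((hsolt t htt).2.neg.mono (Ici_subset_Ici.2 ht.1)).eventually_lt_of_pos hdecr]
        with z hz
      simp only [Pi.neg_apply] at hz
      linarith
  filter_upwards [hcap, hα.eventually_nhdsGT_lt hβ ht.1 hright',
    hβ.neg.eventually_nhdsGT_lt hα ht.1 (by simpa using hleft')] with z hcap hright hleft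
  simp only [Pi.neg_apply] at hleft
  exact ⟨abs_le.2 ⟨hleft.le, hright.le⟩, hcap⟩

end Cone

theorem exists_forall_mem_cone {c : ℝ} (hc : 0 < c) {F₁ F₂ G₁ G₂ : ℝ → ℝ → ℝ}
    (hF₁ : ∀ a t, |F₁ a t| ≤ 1 / 8) (hF₂ : ∀ a t, |F₂ a t| ≤ 1 / 8)
    (hG₁ : ∀ a t, |G₁ a t| ≤ 1 / 8) (hG₂ : ∀ a t, |G₂ a t| ≤ 1 / 8) {φ : ℝ → ℝ → ℝ × ℝ}
    (hφ0 : ∀ a, φ a 0 = (a, c)) (hφ : ∀ a, ContinuousOn (φ a) (Ici 0))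
    (hlip : ∀ T, ∃ K : ℝ≥0, ∀ t ∈ Icc 0 T, LipschitzWith K (φ · t))
    (hsol : ∀ a, ∀ t ≥ 0, φ a t ∈ cone c →
      SolvesAt (F₁ a) (F₂ a) (G₁ a) (G₂ a) (fun t => (φ a t).1) (fun t => (φ a t).2) t) :
    ∃ a ∈ Icc (-c) c, ∀ t ≥ 0, φ a t ∈ cone c := by
  have hα a : ContinuousOn (fun t => (φ a t).1) (Ici 0) := continuous_fst.comp_continuousOn (hφ a)
  have hβ a : ContinuousOn (fun t => (φ a t).2) (Ici 0) := continuous_snd.comp_continuousOn (hφ a)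
  set SR := {a | ExitsRight (fun t => (φ a t).1) (fun t => (φ a t).2)}
  set SL := {a | ExitsRight (-fun t => (φ a t).1) (fun t => (φ a t).2)}
  have hSR : IsOpen SR := isOpen_setOf_exists_mem_mapsTo hφ hlip
    (isOpen_lt continuous_snd continuous_fst)
    (isOpen_lt continuous_const (continuous_fst.add continuous_snd))
  have hSL : IsOpen SL := isOpen_setOf_exists_mem_mapsTo hφ hlip
    (isOpen_lt continuous_snd continuous_fst.neg)
    (isOpen_lt continuous_const (continuous_fst.neg.add continuous_snd))
  have hsol0 a (ha : |a| ≤ c) : ∀ s ∈ Icc (0 : ℝ) 0,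
      SolvesAt (F₁ a) (F₂ a) (G₁ a) (G₂ a) (fun t => (φ a t).1) (fun t => (φ a t).2) s := by
    rintro s ⟨hs, hs'⟩
    obtain rfl := le_antisymm hs' hs
    exact hsol a 0 le_rfl (by simpa [hφ0, cone] using ha)
  have hcR : c ∈ SR := exitsRight_of_eq (hF₁ c) (hF₂ c) (hG₁ c) (hG₂ c) (hα c) (hβ c) le_rfl
    (hsol0 c (abs_of_pos hc).le) (by simp [hφ0, abs_of_pos hc]) (by simp [hφ0, hc]) (by simp [hφ0])
  have hcL : -c ∈ SL := exitsRight_neg_of_eq (hF₁ _) (hF₂ _) (hG₁ _) (hG₂ _) (hα _) (hβ _) le_rfl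
    (hsol0 (-c) (by simp [abs_of_pos hc])) (by simp [hφ0, abs_of_pos hc]) (by simp [hφ0, hc])
    (by simp [hφ0])
  obtain ⟨a, ha, haR, haL⟩ : ∃ a ∈ Icc (-c) c, a ∉ SR ∧ a ∉ SL := by
    by_contra! hcover
    obtain ⟨a, -, haR, haL⟩ := isPreconnected_Icc SR SL hSR hSL
      (fun a ha => or_iff_not_imp_left.2 (hcover a ha))
      ⟨c, ⟨by linarith, le_rfl⟩, hcR⟩ ⟨-c, ⟨le_rfl, by linarith⟩, hcL⟩
    exact ExitsRight.not_exitsRight_neg haR haL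
  refine ⟨a, ha, forall_mem_cone_of_not_exitsRight (hF₁ a) (hF₂ a) (hG₁ a) (hG₂ a) (hα a) (hβ a)
    (hsol a) ?_ (by simp [hφ0, hc]) haR haL⟩
  simpa [hφ0, cone] using abs_le.2 ha

def perturbedField (f₁ f₂ g₁ g₂ : ℝ × ℝ × ℝ → ℝ) (t : ℝ) (x : ℝ × ℝ) : ℝ × ℝ :=
  (x.1 * (1 + f₁ (x.1, x.2, t)) + f₂ (x.1, x.2, t) * x.2,
    -x.2 * (1 + g₁ (x.1, x.2, t)) + g₂ (x.1, x.2, t) * x.1)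

theorem contDiff_uncurry_perturbedField {f₁ f₂ g₁ g₂ : ℝ × ℝ × ℝ → ℝ} (hf₁ : ContDiff ℝ 1 f₁)
    (hf₂ : ContDiff ℝ 1 f₂) (hg₁ : ContDiff ℝ 1 g₁) (hg₂ : ContDiff ℝ 1 g₂) :
    ContDiff ℝ 1 (uncurry (perturbedField f₁ f₂ g₁ g₂)) := by
  unfold perturbedField uncurry
  fun_prop

theorem SolvesAt.of_hasDerivWithinAt {f₁ f₂ g₁ g₂ : ℝ × ℝ × ℝ → ℝ} {γ : ℝ → ℝ × ℝ} {t : ℝ}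
    (h : HasDerivWithinAt γ (perturbedField f₁ f₂ g₁ g₂ t (γ t)) (Ici 0) t) :
    SolvesAt (fun t => f₁ ((γ t).1, (γ t).2, t)) (fun t => f₂ ((γ t).1, (γ t).2, t))
      (fun t => g₁ ((γ t).1, (γ t).2, t)) (fun t => g₂ ((γ t).1, (γ t).2, t))
      (fun t => (γ t).1) (fun t => (γ t).2) t :=
  ⟨(hasFDerivAt_fst (p := γ t)).comp_hasDerivWithinAt t h,
    (hasFDerivAt_snd (p := γ t)).comp_hasDerivWithinAt t h⟩

/-- The coordinatewise retraction of the plane onto the square `closedBall 0 c`. -/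
def clampBox (c : ℝ) (x : ℝ × ℝ) : ℝ × ℝ := (max (-c) (min c x.1), max (-c) (min c x.2))

theorem lipschitzWith_clampBox (c : ℝ) : LipschitzWith 1 (clampBox c) := by
  have h := (LipschitzWith.const_max (LipschitzWith.id.const_min c) (-c))
  unfold clampBox
  simpa using (h.comp LipschitzWith.prod_fst).prodMk (h.comp LipschitzWith.prod_snd)

theorem clampBox_mem_closedBall {c : ℝ} (hc : 0 ≤ c) (x : ℝ × ℝ) :
    clampBox c x ∈ closedBall 0 c := by
  simp only [clampBox, mem_closedBall_zero_iff, Prod.norm_def, Real.norm_eq_abs]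
  exact max_le (abs_le.2 ⟨le_max_left _ _, max_le (by linarith) (min_le_left _ _)⟩)
    (abs_le.2 ⟨le_max_left _ _, max_le (by linarith) (min_le_left _ _)⟩)

theorem clampBox_eq_self {c : ℝ} {x : ℝ × ℝ} (hx : x ∈ closedBall 0 c) : clampBox c x = x := by
  simp only [mem_closedBall_zero_iff, Prod.norm_def, Real.norm_eq_abs, max_le_iff, abs_le] at hx
  simp [clampBox, hx]

section Clamped

variable {F : ℝ → ℝ × ℝ → ℝ × ℝ} {c : ℝ}

theorem exists_norm_le_comp_clampBox (hF : Continuous (uncurry F)) (hc : 0 ≤ c) (T : ℝ) :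
    ∃ L : ℝ≥0, ∀ t ∈ Icc 0 T, ∀ x, ‖F t (clampBox c x)‖ ≤ L := by
  obtain ⟨L, hL⟩ := (isCompact_Icc.prod (isCompact_closedBall 0 c)).exists_bound_of_continuousOn
    hF.continuousOn
  exact ⟨L.toNNReal, fun t ht x =>
    (hL (t, clampBox c x) ⟨ht, clampBox_mem_closedBall hc x⟩).trans (le_coe_toNNReal L)⟩

theorem exists_lipschitzWith_comp_clampBox (hF : ContDiff ℝ 1 (uncurry F)) (hc : 0 ≤ c) (T : ℝ) :
    ∃ K : ℝ≥0, ∀ t ∈ Icc 0 T, LipschitzWith K (fun x => F t (clampBox c x)) := by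
  obtain ⟨K, hK⟩ := hF.locallyLipschitz.locallyLipschitzOn.exists_lipschitzOnWith_of_compact
    (isCompact_Icc.prod (isCompact_closedBall 0 c))
  refine ⟨_, fun t ht => lipschitzOnWith_univ.1 (hK.comp ((LipschitzWith.const t).prodMk
    (lipschitzWith_clampBox c)).lipschitzOnWith fun x _ => ⟨ht, clampBox_mem_closedBall hc x⟩)⟩

end Clamped

theorem exists_forall_mem_cone_hasDerivWithinAt_perturbedField {f₁ f₂ g₁ g₂ : ℝ × ℝ × ℝ → ℝ}
    (hf₁ : ContDiff ℝ 1 f₁) (hf₂ : ContDiff ℝ 1 f₂) (hg₁ : ContDiff ℝ 1 g₁)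
    (hg₂ : ContDiff ℝ 1 g₂) (hf₁s : ∀ p, |f₁ p| ≤ 1 / 8) (hf₂s : ∀ p, |f₂ p| ≤ 1 / 8)
    (hg₁s : ∀ p, |g₁ p| ≤ 1 / 8) (hg₂s : ∀ p, |g₂ p| ≤ 1 / 8) {c : ℝ} (hc : 0 < c) :
    ∃ a ∈ Icc (-c) c, ∃ γ : ℝ → ℝ × ℝ, γ 0 = (a, c) ∧ ∀ t ≥ 0, γ t ∈ cone c ∧
      HasDerivWithinAt γ (perturbedField f₁ f₂ g₁ g₂ t (γ t)) (Ici 0) t := by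
  have hV := contDiff_uncurry_perturbedField hf₁ hf₂ hg₁ hg₂
  have hvlip := exists_lipschitzWith_comp_clampBox hV hc.le
  choose γ hγ0 hγ using exists_isIntegralCurveOn_Ici
    (v := fun t x => perturbedField f₁ f₂ g₁ g₂ t (clampBox c x))
    (fun x => (hV.continuous.comp (continuous_id.prodMk continuous_const)).continuousOn)
    (exists_norm_le_comp_clampBox hV.continuous hc.le) hvlip
  have hderiv x : ∀ t ≥ 0, γ x t ∈ cone c →
      HasDerivWithinAt (γ x) (perturbedField f₁ f₂ g₁ g₂ t (γ x t)) (Ici 0) t :=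
    fun t ht hcone => by
      simpa only [clampBox_eq_self (cone_subset_closedBall c hcone)] using hγ x t ht
  obtain ⟨a, ha, hcone⟩ := exists_forall_mem_cone hc (fun _ _ => hf₁s _) (fun _ _ => hf₂s _)
    (fun _ _ => hg₁s _) (fun _ _ => hg₂s _) (φ := fun a => γ (a, c)) (fun _ => hγ0 _)
    (fun _ => (hγ _).continuousOn)
    (fun T => by
      obtain ⟨K, hK⟩ := exists_lipschitzWith_of_isIntegralCurveOn hvlip hγ0 hγ T
      exact ⟨_, fun t ht => (hK t ht).comp (LipschitzWith.id.prodMk (LipschitzWith.const c))⟩)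
    (fun _ t ht hcone => SolvesAt.of_hasDerivWithinAt (hderiv _ t ht hcone))
  exact ⟨a, ha, γ (a, c), hγ0 _, fun t ht => ⟨hcone t ht, hderiv _ t ht (hcone t ht)⟩⟩

/-- Lemma 3.1: for any `C¹`-small perturbation of the hyperbolic system
`α' = α`, `β' = -β`, every neighborhood of the origin contains initial data
whose trajectory decays like `e^{-t/2}`. -/
theorem stmt_7 :
    ∃ ε₀ : ℝ, 0 < ε₀ ∧
      ∀ f₁ f₂ g₁ g₂ : ℝ × ℝ × ℝ → ℝ,
        ContDiff ℝ 1 f₁ → ContDiff ℝ 1 f₂ → ContDiff ℝ 1 g₁ → ContDiff ℝ 1 g₂ →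
        (∀ p, |f₁ p| < ε₀) → (∀ p, |f₂ p| < ε₀) →
        (∀ p, |g₁ p| < ε₀) → (∀ p, |g₂ p| < ε₀) →
        ∀ r : ℝ, 0 < r →
          ∃ (α₀ β₀ : ℝ) (α β : ℝ → ℝ),
            0 < β₀ ∧ α₀ ^ 2 + β₀ ^ 2 < r ^ 2 ∧ α 0 = α₀ ∧ β 0 = β₀ ∧
            ∀ t : ℝ, 0 ≤ t →
              HasDerivWithinAt α
                (α t * (1 + f₁ (α t, β t, t)) + f₂ (α t, β t, t) * β t)
                (Set.Ici 0) t ∧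
              HasDerivWithinAt β
                (-(β t) * (1 + g₁ (α t, β t, t)) + g₂ (α t, β t, t) * α t)
                (Set.Ici 0) t ∧
              |α t| ≤ Real.exp (-t / 2) * β₀ ∧ |β t| ≤ Real.exp (-t / 2) * β₀ := by
  refine ⟨1 / 8, by norm_num, fun f₁ f₂ g₁ g₂ hf₁ hf₂ hg₁ hg₂ hf₁s hf₂s hg₁s hg₂s r hr => ?_⟩
  obtain ⟨a, ha, γ, hγ0, hγ⟩ := exists_forall_mem_cone_hasDerivWithinAt_perturbedField
    hf₁ hf₂ hg₁ hg₂ (fun p => (hf₁s p).le) (fun p => (hf₂s p).le) (fun p => (hg₁s p).le)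
    (fun p => (hg₂s p).le) (half_pos hr)
  have hsol t (ht : 0 ≤ t) := SolvesAt.of_hasDerivWithinAt (hγ t ht).2
  refine ⟨a, r / 2, fun t => (γ t).1, fun t => (γ t).2, half_pos hr, ?_, by simp [hγ0],
    by simp [hγ0], fun t ht => ⟨(hsol t ht).1, (hsol t ht).2, ?_⟩⟩
  · nlinarith [sq_le_sq' ha.1 ha.2]
  have hcone := (hγ t ht).1
  have hupper := (decay_bounds_of_forall_abs_le (fun _ => (hg₁s _).le) (fun _ => (hg₂s _).le) ht
    (fun s hs => (hsol s hs.1).2) (fun s hs => (hγ s hs.1).1.1)).2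
  simp only [hγ0] at hupper
  exact ⟨hcone.1.trans hupper, (abs_of_nonneg ((abs_nonneg _).trans hcone.1)).trans_le hupper⟩
end

section
/- Let $\epsilon \in (0, 1/10]$, let $a > 0$, and let $\alpha, \beta : [0, (\ln 2)/4] \to \mathbb{R}$ be differentiable functions with $\alpha(0) = a$, $\beta(0) = 2a$, satisfying for all $t \in [0, (\ln 2)/4]$: $|\alpha'(t) - \alpha(t)| \le \epsilon\,(|\alpha(t)| + |\beta(t)|)$ and $|\beta'(t) + \beta(t)| \le \epsilon\,(|\alpha(t)| + |\beta(t)|)$. Then $\alpha(t) \le \beta(t) \le 2\alpha(t)$ and $\alpha(t) > 0$ for all $t \in [0, (\ln 2)/4]$, i.e. the trajectory remains in the closed sector $\overline{\Omega}_+ = \{(\alpha,\beta) : 0 < \alpha \le \beta \le 2\alpha\}$. -/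
/-!
While the trajectory stays in the open sector `0 < α`, `α < 2β`, `β < 3α` (a neighbourhood of the
closed sector away from the origin), `|α| + |β|` is at most `4α` and at most `3β`, so the
perturbation terms are proportional to `α` resp. `β`. Grönwall then pins `α` between
`a e^{(1 ∓ 4ε)t}` and `β` between `2a e^{-(1 ± 3ε)t}`; for `ε ≤ 1/10` and `t ≤ (log 2)/4` these
envelopes lie in the closed sector `α ≤ β ≤ 2α`. As the open sector is open and contains the
closed one, a first-exit-time argument shows the trajectory never leaves it.
-/

open Set Real

theorem le_mul_exp_of_deriv_le {f : ℝ → ℝ} {a b c : ℝ}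
    (hf : ∀ x ∈ Icc a b, DifferentiableAt ℝ f x) (bound : ∀ x ∈ Ico a b, deriv f x ≤ c * f x) :
    ∀ x ∈ Icc a b, f x ≤ f a * exp (c * (x - a)) := by
  intro x hx
  have := le_gronwallBound_of_liminf_deriv_right_le (ε := 0)
    (fun x hx => (hf x hx).continuousAt.continuousWithinAt)
    (fun x hx _ hr =>
      (hf x (Ico_subset_Icc_self hx)).hasDerivAt.hasDerivWithinAt.liminf_right_slope_le hr)
    le_rfl (fun x hx => (bound x hx).trans_eq (add_zero _).symm) x hx
  rwa [gronwallBound_ε0] at this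

theorem mul_exp_le_of_le_deriv {f : ℝ → ℝ} {a b c : ℝ}
    (hf : ∀ x ∈ Icc a b, DifferentiableAt ℝ f x) (bound : ∀ x ∈ Ico a b, c * f x ≤ deriv f x) :
    ∀ x ∈ Icc a b, f a * exp (c * (x - a)) ≤ f x := by
  intro x hx
  have := le_mul_exp_of_deriv_le (f := -f) (fun x hx => (hf x hx).neg)
    (fun x hx => by rw [deriv.neg']; simp only [Pi.neg_apply]; linarith [bound x hx]) x hx
  simp only [Pi.neg_apply, neg_mul] at this
  linarith

theorem IsOpen.mapsTo_Icc_of_bootstrap {X : Type*} [TopologicalSpace X] {γ : ℝ → X}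
    {Ω : Set X} {a b : ℝ} (hΩ : IsOpen Ω) (hγ : ContinuousOn γ (Icc a b))
    (step : ∀ t ∈ Icc a b, MapsTo γ (Ico a t) Ω → γ t ∈ Ω) :
    MapsTo γ (Icc a b) Ω := by
  set exits := Icc a b ∩ γ ⁻¹' Ωᶜ
  have hclosed : IsClosed exits :=
    hγ.preimage_isClosed_of_isClosed isClosed_Icc hΩ.isClosed_compl
  intro t ht
  by_contra htΩ
  have hbdd : BddBelow exits := ⟨a, fun s hs => hs.1.1⟩
  obtain ⟨hfirst, hfirstΩ⟩ := hclosed.csInf_mem ⟨t, ht, htΩ⟩ hbdd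
  refine hfirstΩ (step _ hfirst fun s hs => ?_)
  by_contra hsΩ
  exact notMem_of_lt_csInf hs.2 hbdd ⟨⟨hs.1, hs.2.le.trans hfirst.2⟩, hsΩ⟩

theorem le_mul_and_mul_le_of_abs_sub_le {d x N K ε : ℝ} (hε : 0 ≤ ε) (h : |d - x| ≤ ε * N)
    (hN : N ≤ K * x) : (1 - ε * K) * x ≤ d ∧ d ≤ (1 + ε * K) * x := by
  have := mul_le_mul_of_nonneg_left hN hε
  constructor <;> linarith [abs_le.mp h]

def wideSector : Set (ℝ × ℝ) := {p | 0 < p.1 ∧ p.1 < 2 * p.2 ∧ p.2 < 3 * p.1}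

theorem isOpen_wideSector : IsOpen wideSector :=
  (isOpen_lt continuous_const continuous_fst).inter
    ((isOpen_lt continuous_fst (by fun_prop)).inter (isOpen_lt continuous_snd (by fun_prop)))

theorem abs_add_abs_le_of_mem_wideSector {p : ℝ × ℝ} (hp : p ∈ wideSector) :
    |p.1| + |p.2| ≤ 4 * p.1 ∧ |p.1| + |p.2| ≤ 3 * p.2 := by
  obtain ⟨h1, h2, h3⟩ := hp
  rw [abs_of_pos h1, abs_of_pos (by linarith)]
  constructor <;> linarith

theorem mk_mem_wideSector_of_le_of_le {x y : ℝ} (h : x ≤ y ∧ y ≤ 2 * x ∧ 0 < x) :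
    (x, y) ∈ wideSector := by
  obtain ⟨h1, h2, h3⟩ := h
  exact ⟨h3, by linarith, by linarith⟩

theorem exp_bounds_of_mapsTo_wideSector {ε t : ℝ} {α β : ℝ → ℝ} (hε : 0 ≤ ε)
    (hαd : ∀ s ∈ Icc 0 t, DifferentiableAt ℝ α s) (hβd : ∀ s ∈ Icc 0 t, DifferentiableAt ℝ β s)
    (hα : ∀ s ∈ Ico 0 t, |deriv α s - α s| ≤ ε * (|α s| + |β s|))
    (hβ : ∀ s ∈ Ico 0 t, |deriv β s + β s| ≤ ε * (|α s| + |β s|))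
    (hW : MapsTo (fun s => (α s, β s)) (Ico 0 t) wideSector) (ht : 0 ≤ t) :
    α 0 * exp ((1 - ε * 4) * t) ≤ α t ∧ α t ≤ α 0 * exp ((1 + ε * 4) * t) ∧
      β 0 * exp (-(1 + ε * 3) * t) ≤ β t ∧ β t ≤ β 0 * exp (-(1 - ε * 3) * t) := by
  have hαb (s) (hs : s ∈ Ico 0 t) := le_mul_and_mul_le_of_abs_sub_le hε (hα s hs)
    (abs_add_abs_le_of_mem_wideSector (hW hs)).1
  have hβb (s) (hs : s ∈ Ico 0 t) := le_mul_and_mul_le_of_abs_sub_le (d := -deriv β s) hε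
    (by rw [← abs_neg]; convert hβ s hs using 2; ring) (abs_add_abs_le_of_mem_wideSector (hW hs)).2
  have htI : t ∈ Icc 0 t := ⟨ht, le_rfl⟩
  refine ⟨?_, ?_, ?_, ?_⟩
  · simpa using mul_exp_le_of_le_deriv hαd (fun s hs => (hαb s hs).1) t htI
  · simpa using le_mul_exp_of_deriv_le hαd (fun s hs => (hαb s hs).2) t htI
  · simpa using mul_exp_le_of_le_deriv hβd (fun s hs => by linarith [(hβb s hs).2]) t htI
  · simpa using le_mul_exp_of_deriv_le hβd (fun s hs => by linarith [(hβb s hs).1]) t htI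

theorem le_of_exp_bounds {ε a t x y : ℝ} (ha : 0 < a) (hε : 7 * ε ≤ 2) (ht : 0 ≤ t)
    (htε : (2 + 7 * ε) * t ≤ log 2)
    (hx : a * exp ((1 - ε * 4) * t) ≤ x ∧ x ≤ a * exp ((1 + ε * 4) * t))
    (hy : 2 * a * exp (-(1 + ε * 3) * t) ≤ y ∧ y ≤ 2 * a * exp (-(1 - ε * 3) * t)) :
    x ≤ y ∧ y ≤ 2 * x ∧ 0 < x := by
  refine ⟨?_, ?_, lt_of_lt_of_le (by positivity) hx.1⟩
  · calc x ≤ a * exp ((1 + ε * 4) * t) := hx.2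
      _ = a * (exp ((2 + 7 * ε) * t) * exp (-(1 + ε * 3) * t)) := by rw [← exp_add]; ring_nf
      _ ≤ a * (2 * exp (-(1 + ε * 3) * t)) := by
        gcongr
        exact (exp_le_exp.2 htε).trans_eq (exp_log two_pos)
      _ = 2 * a * exp (-(1 + ε * 3) * t) := by ring
      _ ≤ y := hy.1
  · calc y ≤ 2 * a * exp (-(1 - ε * 3) * t) := hy.2
      _ ≤ 2 * (a * exp ((1 - ε * 4) * t)) := by
        rw [← mul_assoc]
        gcongr
        nlinarith
      _ ≤ 2 * x := by linarith [hx.1]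

/-- Trajectory confinement: for the perturbed hyperbolic system with `ε ≤ 1/10`,
a trajectory starting at `(a, 2a)` remains in the closed sector
`{0 < α ≤ β ≤ 2α}` for `t ∈ [0, (ln 2)/4]`. -/
theorem stmt_10 (ε a : ℝ) (hε : 0 < ε) (hε' : ε ≤ 1 / 10) (ha : 0 < a)
    (α β : ℝ → ℝ) (hα0 : α 0 = a) (hβ0 : β 0 = 2 * a)
    (hαd : ∀ t ∈ Set.Icc 0 (Real.log 2 / 4), DifferentiableAt ℝ α t)
    (hβd : ∀ t ∈ Set.Icc 0 (Real.log 2 / 4), DifferentiableAt ℝ β t)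
    (hα : ∀ t ∈ Set.Icc 0 (Real.log 2 / 4),
      |deriv α t - α t| ≤ ε * (|α t| + |β t|))
    (hβ : ∀ t ∈ Set.Icc 0 (Real.log 2 / 4),
      |deriv β t + β t| ≤ ε * (|α t| + |β t|)) :
    ∀ t ∈ Set.Icc 0 (Real.log 2 / 4), α t ≤ β t ∧ β t ≤ 2 * α t ∧ 0 < α t := by
  have sector_of_wideSector_before : ∀ t ∈ Icc 0 (log 2 / 4),
      MapsTo (fun s => (α s, β s)) (Ico 0 t) wideSector →
        α t ≤ β t ∧ β t ≤ 2 * α t ∧ 0 < α t := by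
    intro t ht hW
    have sub : Icc 0 t ⊆ Icc 0 (log 2 / 4) := Icc_subset_Icc_right ht.2
    obtain ⟨h1, h2, h3, h4⟩ := exp_bounds_of_mapsTo_wideSector hε.le
      (fun s hs => hαd s (sub hs)) (fun s hs => hβd s (sub hs))
      (fun s hs => hα s (sub (Ico_subset_Icc_self hs)))
      (fun s hs => hβ s (sub (Ico_subset_Icc_self hs))) hW ht.1
    rw [hα0] at h1 h2
    rw [hβ0] at h3 h4
    exact le_of_exp_bounds ha (by linarith) ht.1
      (by nlinarith [ht.1, ht.2, log_pos one_lt_two]) ⟨h1, h2⟩ ⟨h3, h4⟩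
  have hW : MapsTo (fun s => (α s, β s)) (Icc 0 (log 2 / 4)) wideSector :=
    isOpen_wideSector.mapsTo_Icc_of_bootstrap
      (fun s hs => ((hαd s hs).continuousAt.prodMk (hβd s hs).continuousAt).continuousWithinAt)
      (fun t ht hW => mk_mem_wideSector_of_le_of_le (sector_of_wideSector_before t ht hW))
  exact fun t ht => sector_of_wideSector_before t ht
    fun s hs => hW ⟨hs.1, hs.2.le.trans ht.2⟩
end
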